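/- arXiv:1901.05661 — 6 statements merged into one kernel-verified Lean document; each statement's English description precedes it below -/
import Mathlib

section
/- Let M̃ = {x ∈ A : ∃ m ∈ M, φ(m) ≠ 0 and m⊗x ∈ M}. Then F̃ is M̃-stable (M̃ ⊆ F̃ and m⊗u ∈ F̃ for m ∈ M̃, u ∈ F̃) and φ̃ is an M̃-form on F̃, i.e. φ̃(m⊗u) = φ̃(m)φ̃(u) for all m ∈ M̃, u ∈ F̃. -/
/-!
A witness `a ∈ M` with `φ a ≠ 0` and `a * x ∈ F` lets one set `φ̃ x = φ(a x) / φ a`. This is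
independent of the witness, since `φ a * φ (c x) = φ (a c x) = φ c * φ (a x)`. If `a` witnesses
`m ∈ M̃` and `b` witnesses `u ∈ F̃`, then `a b` witnesses `m u ∈ F̃` and
`φ((a b)(m u)) = φ((a m)(b u)) = φ(a m) φ(b u)`, which gives both stability and multiplicativity.
-/

section FormExtension

variable {K A : Type*} [Field K] [CommRing A] [Algebra K A]
  {M : Subalgebra K A} {F : Submodule K A} (hMF : ∀ m ∈ M, m ∈ F) (φ : F →ₗ[K] K)

/-- `formExtension hMF φ M` and `formExtension hMF φ F` are `M̃` and `F̃`. -/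
def formExtension (S : Set A) : Set A :=
  {x | ∃ a, ∃ ha : a ∈ M, φ ⟨a, hMF a ha⟩ ≠ 0 ∧ a * x ∈ S}

def IsMForm : Prop :=
  ∀ (m : A) (hm : m ∈ M) (u : A) (hu : u ∈ F) (hmu : m * u ∈ F),
    φ ⟨m * u, hmu⟩ = φ ⟨m, hMF m hm⟩ * φ ⟨u, hu⟩

variable {hMF φ}

theorem formExtension_mono {S T : Set A} (hST : S ⊆ T) :
    formExtension hMF φ S ⊆ formExtension hMF φ T := by
  rintro x ⟨a, ha, hφa, hax⟩
  exact ⟨a, ha, hφa, hST hax⟩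

theorem IsMForm.mul_mem_formExtension (hφ : IsMForm hMF φ)
    (hstable : ∀ m ∈ M, ∀ u ∈ F, m * u ∈ F) {m u : A}
    (hm : m ∈ formExtension hMF φ M) (hu : u ∈ formExtension hMF φ F) :
    m * u ∈ formExtension hMF φ F := by
  obtain ⟨a, ha, hφa, ham⟩ := hm
  obtain ⟨b, hb, hφb, hbu⟩ := hu
  refine ⟨a * b, M.mul_mem ha hb, ?_, ?_⟩
  · rw [hφ a ha b (hMF b hb)]
    exact mul_ne_zero hφa hφb
  · rw [mul_mul_mul_comm]
    exact hstable _ ham _ hbu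

theorem IsMForm.div_eq_div (hφ : IsMForm hMF φ)
    (hstable : ∀ m ∈ M, ∀ u ∈ F, m * u ∈ F) {a c x : A}
    (ha : a ∈ M) (hφa : φ ⟨a, hMF a ha⟩ ≠ 0) (hax : a * x ∈ F)
    (hc : c ∈ M) (hφc : φ ⟨c, hMF c hc⟩ ≠ 0) (hcx : c * x ∈ F) :
    φ ⟨c * x, hcx⟩ / φ ⟨c, hMF c hc⟩ = φ ⟨a * x, hax⟩ / φ ⟨a, hMF a ha⟩ := by
  rw [div_eq_div_iff hφc hφa, mul_comm, mul_comm (φ ⟨a * x, hax⟩),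
    ← hφ a ha _ hcx (hstable a ha _ hcx), ← hφ c hc _ hax (hstable c hc _ hax)]
  exact congrArg φ (Subtype.ext (mul_left_comm a c x))

theorem IsMForm.div_eq_div_mul_div (hφ : IsMForm hMF φ)
    (hstable : ∀ m ∈ M, ∀ u ∈ F, m * u ∈ F) {m u a b c : A}
    (ha : a ∈ M) (hφa : φ ⟨a, hMF a ha⟩ ≠ 0) (ham : a * m ∈ M)
    (hb : b ∈ M) (hφb : φ ⟨b, hMF b hb⟩ ≠ 0) (hbu : b * u ∈ F)
    (hc : c ∈ M) (hφc : φ ⟨c, hMF c hc⟩ ≠ 0) (hcmu : c * (m * u) ∈ F) :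
    φ ⟨c * (m * u), hcmu⟩ / φ ⟨c, hMF c hc⟩ =
      (φ ⟨a * m, hMF _ ham⟩ / φ ⟨a, hMF a ha⟩) * (φ ⟨b * u, hbu⟩ / φ ⟨b, hMF b hb⟩) := by
  have hab : a * b ∈ M := M.mul_mem ha hb
  have hφab : φ ⟨a * b, hMF _ hab⟩ = φ ⟨a, hMF a ha⟩ * φ ⟨b, hMF b hb⟩ :=
    hφ a ha b (hMF b hb) _
  have hamu : (a * m) * (b * u) ∈ F := hstable _ ham _ hbu
  have habmu : (a * b) * (m * u) ∈ F := mul_mul_mul_comm a m b u ▸ hamu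
  calc φ ⟨c * (m * u), hcmu⟩ / φ ⟨c, hMF c hc⟩
      = φ ⟨(a * b) * (m * u), habmu⟩ / φ ⟨a * b, hMF _ hab⟩ :=
        hφ.div_eq_div hstable hab (hφab ▸ mul_ne_zero hφa hφb) habmu hc hφc hcmu
    _ = φ ⟨(a * m) * (b * u), hamu⟩ / (φ ⟨a, hMF a ha⟩ * φ ⟨b, hMF b hb⟩) := by
        rw [hφab]
        congr 2
        exact Subtype.ext (mul_mul_mul_comm a b m u)
    _ = _ := by rw [hφ _ ham _ hbu, div_mul_div_comm]

end FormExtension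

theorem stmt_3_general {K A : Type*} [Field K] [CommRing A] [Algebra K A]
    (M : Subalgebra K A) (F : Submodule K A)
    (hMF : ∀ m ∈ M, m ∈ F)
    (hstable : ∀ m ∈ M, ∀ u ∈ F, m * u ∈ F)
    (φ : F →ₗ[K] K)
    (hmul : ∀ (m u : A) (hm : m ∈ M) (hu : u ∈ F),
      φ ⟨m * u, hstable m hm u hu⟩ = φ ⟨m, hMF m hm⟩ * φ ⟨u, hu⟩) :
    -- M̃ ⊆ F̃
    ({x : A | ∃ a, ∃ ha : a ∈ M, φ ⟨a, hMF a ha⟩ ≠ 0 ∧ a * x ∈ M} ⊆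
      {x : A | ∃ a, ∃ ha : a ∈ M, φ ⟨a, hMF a ha⟩ ≠ 0 ∧ a * x ∈ F}) ∧
    -- F̃ is stable under multiplication by elements of M̃
    (∀ m ∈ {x : A | ∃ a, ∃ ha : a ∈ M, φ ⟨a, hMF a ha⟩ ≠ 0 ∧ a * x ∈ M},
      ∀ u ∈ {x : A | ∃ a, ∃ ha : a ∈ M, φ ⟨a, hMF a ha⟩ ≠ 0 ∧ a * x ∈ F},
        m * u ∈ {x : A | ∃ a, ∃ ha : a ∈ M, φ ⟨a, hMF a ha⟩ ≠ 0 ∧ a * x ∈ F}) ∧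
    -- φ̃(m ⊗ u) = φ̃(m) φ̃(u)
    (∀ (m u : A)
        (a : A) (ha : a ∈ M) (_ : φ ⟨a, hMF a ha⟩ ≠ 0) (ham : a * m ∈ M)
        (b : A) (hb : b ∈ M) (_ : φ ⟨b, hMF b hb⟩ ≠ 0) (hbu : b * u ∈ F)
        (c : A) (hc : c ∈ M) (_ : φ ⟨c, hMF c hc⟩ ≠ 0) (hcmu : c * (m * u) ∈ F),
      φ ⟨c * (m * u), hcmu⟩ / φ ⟨c, hMF c hc⟩ =
        (φ ⟨a * m, hMF _ ham⟩ / φ ⟨a, hMF a ha⟩) *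
          (φ ⟨b * u, hbu⟩ / φ ⟨b, hMF b hb⟩)) := by
  have hφ : IsMForm hMF φ := fun m hm u hu _ => hmul m u hm hu
  exact ⟨formExtension_mono hMF,
    fun m hm u hu => hφ.mul_mem_formExtension hstable hm hu,
    fun m u a ha hφa ham b hb hφb hbu c hc hφc hcmu =>
      hφ.div_eq_div_mul_div hstable ha hφa ham hb hφb hbu hc hφc hcmu⟩

/-- F̃ is M̃-stable and φ̃ is an M̃-form on F̃ (multiplicativity expressed via
    admissible witnesses). -/
theorem stmt_3 {K A : Type*} [Field K] [CommRing A] [Algebra K A]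
    (M : Subalgebra K A) (F : Submodule K A)
    (hMF : ∀ m ∈ M, m ∈ F)
    (hstable : ∀ m ∈ M, ∀ u ∈ F, m * u ∈ F)
    (φ : F →ₗ[K] K)
    (hone : φ ⟨1, hMF 1 M.one_mem⟩ = 1)
    (hmul : ∀ (m u : A) (hm : m ∈ M) (hu : u ∈ F),
      φ ⟨m * u, hstable m hm u hu⟩ = φ ⟨m, hMF m hm⟩ * φ ⟨u, hu⟩) :
    -- M̃ ⊆ F̃
    ({x : A | ∃ a, ∃ ha : a ∈ M, φ ⟨a, hMF a ha⟩ ≠ 0 ∧ a * x ∈ M} ⊆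
      {x : A | ∃ a, ∃ ha : a ∈ M, φ ⟨a, hMF a ha⟩ ≠ 0 ∧ a * x ∈ F}) ∧
    -- F̃ is stable under multiplication by elements of M̃
    (∀ m ∈ {x : A | ∃ a, ∃ ha : a ∈ M, φ ⟨a, hMF a ha⟩ ≠ 0 ∧ a * x ∈ M},
      ∀ u ∈ {x : A | ∃ a, ∃ ha : a ∈ M, φ ⟨a, hMF a ha⟩ ≠ 0 ∧ a * x ∈ F},
        m * u ∈ {x : A | ∃ a, ∃ ha : a ∈ M, φ ⟨a, hMF a ha⟩ ≠ 0 ∧ a * x ∈ F}) ∧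
    -- φ̃(m ⊗ u) = φ̃(m) φ̃(u)
    (∀ (m u : A)
        (a : A) (ha : a ∈ M) (_ : φ ⟨a, hMF a ha⟩ ≠ 0) (ham : a * m ∈ M)
        (b : A) (hb : b ∈ M) (_ : φ ⟨b, hMF b hb⟩ ≠ 0) (hbu : b * u ∈ F)
        (c : A) (hc : c ∈ M) (_ : φ ⟨c, hMF c hc⟩ ≠ 0) (hcmu : c * (m * u) ∈ F),
      φ ⟨c * (m * u), hcmu⟩ / φ ⟨c, hMF c hc⟩ =
        (φ ⟨a * m, hMF _ ham⟩ / φ ⟨a, hMF a ha⟩) *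
          (φ ⟨b * u, hbu⟩ / φ ⟨b, hMF b hb⟩)) :=
  stmt_3_general M F hMF hstable φ hmul
end

section
/- The extension operation is idempotent: if (F̂, φ̂) denotes the M̃-extension of (F̃, φ̃), then F̂ = F̃ and φ̂ = φ̃. -/
/-- The extension operation is idempotent: the M̃-extension (F̂, φ̂) of (F̃, φ̃)
    equals (F̃, φ̃). -/
theorem stmt_5 {K A : Type*} [Field K] [CommRing A] [Algebra K A]
    (M : Subalgebra K A) (F : Submodule K A)
    (hMF : ∀ m ∈ M, m ∈ F)
    (hstable : ∀ m ∈ M, ∀ u ∈ F, m * u ∈ F)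
    (φ : F →ₗ[K] K)
    (hone : φ ⟨1, hMF 1 M.one_mem⟩ = 1)
    (hmul : ∀ (m u : A) (hm : m ∈ M) (hu : u ∈ F),
      φ ⟨m * u, hstable m hm u hu⟩ = φ ⟨m, hMF m hm⟩ * φ ⟨u, hu⟩) :
    -- F̂ = F̃ as sets
    ({x : A | ∃ m n, ∃ hn : n ∈ M, ∃ hnm : n * m ∈ M,
        φ ⟨n, hMF n hn⟩ ≠ 0 ∧ φ ⟨n * m, hMF _ hnm⟩ ≠ 0 ∧
        m * x ∈ {y : A | ∃ p, ∃ hp : p ∈ M, φ ⟨p, hMF p hp⟩ ≠ 0 ∧ p * y ∈ F}} =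
      {x : A | ∃ p, ∃ hp : p ∈ M, φ ⟨p, hMF p hp⟩ ≠ 0 ∧ p * x ∈ F}) ∧
    -- φ̂ = φ̃ : for x ∈ F̂ with the corresponding witness data, the value of φ̂
    -- agrees with the value of φ̃
    (∀ (x m n : A) (hn : n ∈ M) (hnm : n * m ∈ M)
        (_ : φ ⟨n, hMF n hn⟩ ≠ 0) (_ : φ ⟨n * m, hMF _ hnm⟩ ≠ 0)
        (p : A) (hp : p ∈ M) (_ : φ ⟨p, hMF p hp⟩ ≠ 0) (hpmx : p * (m * x) ∈ F)
        (q : A) (hq : q ∈ M) (_ : φ ⟨q, hMF q hq⟩ ≠ 0) (hqx : q * x ∈ F),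
      (φ ⟨p * (m * x), hpmx⟩ / φ ⟨p, hMF p hp⟩) /
          (φ ⟨n * m, hMF _ hnm⟩ / φ ⟨n, hMF n hn⟩) =
        φ ⟨q * x, hqx⟩ / φ ⟨q, hMF q hq⟩) := by
  have φc : ∀ (a b : A) (hab : a = b) (ha : a ∈ F) (hb : b ∈ F),
      φ ⟨a, ha⟩ = φ ⟨b, hb⟩ := by
    intro a b hab ha hb; subst hab; rfl
  constructor
  · ext x
    simp only [Set.mem_setOf_eq]
    constructor
    · rintro ⟨m, n, hn, hnm, hφn, hφnm, p, hp, hφp, hpmx⟩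
      -- use q = n * m * p
      refine ⟨n * m * p, mul_mem hnm hp, ?_, ?_⟩
      · have := hmul (n * m) p hnm (hMF p hp)
        rw [φc (n * m * p) ((n * m) * p) rfl _ (hstable _ hnm _ (hMF p hp)), this]
        exact mul_ne_zero hφnm hφp
      · have : n * m * p * x = n * (p * (m * x)) := by ring
        rw [this]
        exact hstable n hn _ hpmx
    · rintro ⟨p, hp, hφp, hpx⟩
      refine ⟨1, 1, M.one_mem, by simpa using M.one_mem, ?_, ?_, p, hp, hφp, ?_⟩
      · rw [hone]; exact one_ne_zero
      · rw [φc (1 * 1) 1 (by ring) _ (hMF 1 M.one_mem), hone]; exact one_ne_zero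
      · have : p * (1 * x) = p * x := by ring
        rw [this]; exact hpx
  · intro x m n hn hnm hφn hφnm p hp hφp hpmx q hq hφq hqx
    -- key identity: φ(q) * φ(n * (p*(m*x))) = φ((n*m)*p) * φ(q*x) via equal products
    have hnp : n * (p * (m * x)) ∈ F := hstable n hn _ hpmx
    have hnmp : (n * m) * p ∈ F := hstable _ hnm _ (hMF p hp)
    have hnmpM : (n * m) * p ∈ M := mul_mem hnm hp
    have e1 : φ ⟨n * (p * (m * x)), hnp⟩ = φ ⟨n, hMF n hn⟩ * φ ⟨p * (m * x), hpmx⟩ :=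
      hmul n _ hn hpmx
    have e2 : φ ⟨(n * m) * p, hnmp⟩ = φ ⟨n * m, hMF _ hnm⟩ * φ ⟨p, hMF p hp⟩ :=
      hmul (n * m) p hnm (hMF p hp)
    have e3 : φ ⟨q * (n * (p * (m * x))), hstable q hq _ hnp⟩
        = φ ⟨q, hMF q hq⟩ * φ ⟨n * (p * (m * x)), hnp⟩ := hmul q _ hq hnp
    have e4 : φ ⟨((n * m) * p) * (q * x), hstable _ hnmpM _ hqx⟩
        = φ ⟨(n * m) * p, hnmp⟩ * φ ⟨q * x, hqx⟩ := hmul _ _ hnmpM hqx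
    have eq0 : φ ⟨q * (n * (p * (m * x))), hstable q hq _ hnp⟩
        = φ ⟨((n * m) * p) * (q * x), hstable _ hnmpM _ hqx⟩ :=
      φc _ _ (by ring) _ _
    have key : φ ⟨q, hMF q hq⟩ * (φ ⟨n, hMF n hn⟩ * φ ⟨p * (m * x), hpmx⟩)
        = φ ⟨n * m, hMF _ hnm⟩ * φ ⟨p, hMF p hp⟩ * φ ⟨q * x, hqx⟩ := by
      rw [← e1, ← e2, ← e3, ← e4, eq0]
    field_simp
    linear_combination key
end

section
/- Cancellation property: if m ∈ M̃ with φ̃(m) ≠ 0, then for every x ∈ A, x ∈ F̃ if and only if m⊗x ∈ F̃. -/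
/-- Cancellation property: if m ∈ M̃ with φ̃(m) ≠ 0, then for every x ∈ A,
    x ∈ F̃ ↔ m ⊗ x ∈ F̃. -/
theorem stmt_6 {K A : Type*} [Field K] [CommRing A] [Algebra K A]
    (M : Subalgebra K A) (F : Submodule K A)
    (hMF : ∀ m ∈ M, m ∈ F)
    (hstable : ∀ m ∈ M, ∀ u ∈ F, m * u ∈ F)
    (φ : F →ₗ[K] K)
    (hone : φ ⟨1, hMF 1 M.one_mem⟩ = 1)
    (hmul : ∀ (m u : A) (hm : m ∈ M) (hu : u ∈ F),
      φ ⟨m * u, hstable m hm u hu⟩ = φ ⟨m, hMF m hm⟩ * φ ⟨u, hu⟩)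
    (m a : A) (ha : a ∈ M) (ham : a * m ∈ M)
    (hφa : φ ⟨a, hMF a ha⟩ ≠ 0)
    (hφam : φ ⟨a * m, hMF _ ham⟩ ≠ 0) :
    ∀ x : A,
      (x ∈ {y : A | ∃ p, ∃ hp : p ∈ M, φ ⟨p, hMF p hp⟩ ≠ 0 ∧ p * y ∈ F}) ↔
      (m * x ∈ {y : A | ∃ p, ∃ hp : p ∈ M, φ ⟨p, hMF p hp⟩ ≠ 0 ∧ p * y ∈ F}) := by
  intro x
  constructor
  · rintro ⟨p, hp, hφp, hpx⟩
    refine ⟨a * p, M.mul_mem ha hp, ?_, ?_⟩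
    · have : φ ⟨a * p, hMF _ (M.mul_mem ha hp)⟩
          = φ ⟨a, hMF a ha⟩ * φ ⟨p, hMF p hp⟩ := hmul a p ha (hMF p hp)
      rw [this]
      exact mul_ne_zero hφa hφp
    · have h : a * p * (m * x) = (a * m) * (p * x) := by ring
      rw [h]
      exact hstable _ ham _ hpx
  · rintro ⟨p, hp, hφp, hpmx⟩
    refine ⟨(a * m) * p, M.mul_mem ham hp, ?_, ?_⟩
    · have : φ ⟨(a * m) * p, hMF _ (M.mul_mem ham hp)⟩
          = φ ⟨a * m, hMF _ ham⟩ * φ ⟨p, hMF p hp⟩ := hmul _ p ham (hMF p hp)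
      rw [this]
      exact mul_ne_zero hφam hφp
    · have h : (a * m) * p * x = a * (p * (m * x)) := by ring
      rw [h]
      exact hstable a ha _ hpmx
end

section
/- Non-membership criterion: for x ∈ A, if there exists m ∈ M with φ(m) = 0, m⊗x ∈ F, and φ(m⊗x) ≠ 0, then x ∉ F̃. -/
/-- Non-membership criterion: if m ∈ M with φ(m) = 0, m ⊗ x ∈ F and
    φ(m ⊗ x) ≠ 0, then x ∉ F̃. -/
theorem stmt_7 {K A : Type*} [Field K] [CommRing A] [Algebra K A]
    (M : Subalgebra K A) (F : Submodule K A)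
    (hMF : ∀ m ∈ M, m ∈ F)
    (hstable : ∀ m ∈ M, ∀ u ∈ F, m * u ∈ F)
    (φ : F →ₗ[K] K)
    (hone : φ ⟨1, hMF 1 M.one_mem⟩ = 1)
    (hmul : ∀ (m u : A) (hm : m ∈ M) (hu : u ∈ F),
      φ ⟨m * u, hstable m hm u hu⟩ = φ ⟨m, hMF m hm⟩ * φ ⟨u, hu⟩)
    (x m : A) (hm : m ∈ M) (hφm : φ ⟨m, hMF m hm⟩ = 0)
    (hmx : m * x ∈ F) (hφmx : φ ⟨m * x, hmx⟩ ≠ 0) :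
    x ∉ {y : A | ∃ n, ∃ hn : n ∈ M, φ ⟨n, hMF n hn⟩ ≠ 0 ∧ n * y ∈ F} := by
  rintro ⟨n, hn, hφn, hnx⟩
  have h1 := hmul m (n * x) hm hnx
  have h2 := hmul n (m * x) hn hmx
  have key : (⟨m * (n * x), hstable m hm _ hnx⟩ : F)
      = ⟨n * (m * x), hstable n hn _ hmx⟩ := Subtype.ext (by ring)
  rw [hφm, zero_mul, key, h2] at h1
  exact mul_ne_zero hφn hφmx h1
end

section
/- The constant sequence G₁ = (1,1,1,…) does not belong to the extension Σ̃: there is no absolutely summable sequence m with ∑m ≠ 0 such that m ⊗ G₁ has a convergent sum. (Proof via: G₁ ⊗ (e₀ − e₁) = e₀, ∑(e₀−e₁)=0, ∑e₀=1≠0.) -/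
/-
The terms of `m ⊗ G₁` are the partial sums of `m`, so they tend to `∑ m ≠ 0`; but the terms of a
convergent series tend to `0`.
-/

open Filter Topology

/-- The Cauchy product. -/
noncomputable def cauchyMul (u v : ℕ → ℂ) : ℕ → ℂ :=
  fun n => ∑ k ∈ Finset.range (n + 1), u k * v (n - k)

theorem tendsto_zero_of_tendsto_sum_range {G : Type*} [AddCommGroup G] [TopologicalSpace G]
    [IsTopologicalAddGroup G] {f : ℕ → G} {s : G}
    (h : Tendsto (fun N => ∑ k ∈ Finset.range N, f k) atTop (𝓝 s)) :
    Tendsto f atTop (𝓝 0) := by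
  have h_diff := (h.comp (tendsto_add_atTop_nat 1)).sub h
  simpa only [Function.comp_def, Finset.sum_range_succ, add_sub_cancel_left, sub_self]
    using h_diff

theorem cauchyMul_one_right (u : ℕ → ℂ) (n : ℕ) :
    cauchyMul u (fun _ => 1) n = ∑ k ∈ Finset.range (n + 1), u k := by
  simp only [cauchyMul, mul_one]

theorem Summable.tendsto_cauchyMul_one_right {u : ℕ → ℂ} (hu : Summable u) :
    Tendsto (cauchyMul u fun _ => 1) atTop (𝓝 (∑' n, u n)) := by
  have h_shift := hu.hasSum.tendsto_sum_nat.comp (tendsto_add_atTop_nat 1)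
  simpa only [Function.comp_def, ← cauchyMul_one_right] using h_shift

/-- G₁ = (1,1,1,…) does not belong to the extension S̃em: there is no
    absolutely summable m with ∑ m ≠ 0 such that m ⊗ G₁ has a convergent sum. -/
theorem stmt_11 :
    ¬ ∃ m : ℕ → ℂ, (Summable fun n => ‖m n‖) ∧ (∑' n, m n) ≠ 0 ∧
      ∃ s : ℂ, Tendsto (fun N => ∑ k ∈ Finset.range N, cauchyMul m (fun _ => (1 : ℂ)) k)
        atTop (𝓝 s) := by
  rintro ⟨m, h_abs, h_ne, s, h_conv⟩
  exact h_ne <| tendsto_nhds_unique (Summable.of_norm h_abs).tendsto_cauchyMul_one_right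
    (tendsto_zero_of_tendsto_sum_range h_conv)
end

section
/- For all n ∈ ℕ, P_n ⊛ (e₀ − 2^{n+1} e₁) = AP_n, where P_n(k) = (k+1)ⁿ, AP_n(k) = (−1)ᵏ(k+1)ⁿ, and ⊛ is the product (u ⊛ v)ₘ = ∑_{(i+1)(j+1)=m+1} u_i v_j. -/
/-- The Dirichlet-type product: (u ⊛ v)ₘ = ∑_{(i+1)(j+1) = m+1} u_i v_j. -/
noncomputable def dprod (u v : ℕ → ℂ) : ℕ → ℂ :=
  fun m => ∑ d ∈ (m + 1).divisors, u (d - 1) * v ((m + 1) / d - 1)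

/-- The indicator sequence at index k. -/
noncomputable def e (k : ℕ) : ℕ → ℂ := fun n => if n = k then 1 else 0

/-- P_n ⊛ (e₀ - 2^(n+1) e₁) = AP_n, where P_n(k) = (k+1)^n and
    AP_n(k) = (-1)^k (k+1)^n. -/
theorem stmt_18 (n : ℕ) :
    dprod (fun k => ((k : ℂ) + 1) ^ n) (e 0 - (2 : ℂ) ^ (n + 1) • e 1) =
      fun k : ℕ => (-1 : ℂ) ^ k * ((k : ℂ) + 1) ^ n := by
  funext m
  have hN : m + 1 ≠ 0 := Nat.succ_ne_zero m
  simp only [dprod, e, Pi.sub_apply, Pi.smul_apply, smul_eq_mul]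
  have key : ∑ d ∈ (m + 1).divisors,
      (((d - 1 : ℕ) : ℂ) + 1) ^ n *
        ((if (m + 1) / d - 1 = 0 then (1 : ℂ) else 0) -
          (2 : ℂ) ^ (n + 1) * (if (m + 1) / d - 1 = 1 then (1 : ℂ) else 0))
      = ∑ d ∈ (m + 1).divisors,
      ((if d = m + 1 then ((m + 1 : ℕ) : ℂ) ^ n else 0) -
        (2 : ℂ) ^ (n + 1) *
          (if d = (m + 1) / 2 ∧ 2 ∣ (m + 1) then ((d : ℕ) : ℂ) ^ n else 0)) := by
    apply Finset.sum_congr rfl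
    intro d hd
    rw [Nat.mem_divisors] at hd
    obtain ⟨hdvd, _⟩ := hd
    have hd0 : d ≠ 0 := by rintro rfl; simp at hdvd
    have hd1 : 1 ≤ d := Nat.one_le_iff_ne_zero.2 hd0
    have hq : (m + 1) / d * d = m + 1 := Nat.div_mul_cancel hdvd
    set q := (m + 1) / d with hqdef
    have hq1 : 1 ≤ q := by
      rcases Nat.eq_zero_or_pos q with h | h
      · rw [h] at hq; omega
      · exact h
    have hcast : (((d - 1 : ℕ) : ℂ) + 1) = (d : ℂ) := by
      have h : d - 1 + 1 = d := by omega
      rw [show (((d - 1 : ℕ) : ℂ) + 1) = ((d - 1 + 1 : ℕ) : ℂ) by push_cast; ring, h]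
    rw [hcast]
    by_cases h1 : q = 1
    · have hd' : d = m + 1 := by rw [h1, one_mul] at hq; exact hq
      have hnot : ¬(d = (m + 1) / 2 ∧ 2 ∣ (m + 1)) := by
        rintro ⟨h2, h3⟩; omega
      rw [if_pos (by omega : q - 1 = 0), if_neg (by omega : ¬ q - 1 = 1),
        if_pos hd', if_neg hnot, hd']
      ring
    · by_cases h2 : q = 2
      · have hd' : m + 1 = 2 * d := by rw [h2] at hq; omega
        have hcond : d = (m + 1) / 2 ∧ 2 ∣ (m + 1) := by omega
        have hne : ¬ d = m + 1 := by omega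
        rw [if_neg (by omega : ¬ q - 1 = 0), if_pos (by omega : q - 1 = 1),
          if_neg hne, if_pos hcond]
        ring
      · have hne1 : ¬ d = m + 1 := by
          rintro rfl
          exact h1 (by nlinarith [hq, hq1])
        have hnot : ¬(d = (m + 1) / 2 ∧ 2 ∣ (m + 1)) := by
          rintro ⟨ha, hb⟩
          apply h2
          have hd' : m + 1 = 2 * d := by omega
          nlinarith [hq, hq1]
        rw [if_neg (by omega : ¬ q - 1 = 0), if_neg (by omega : ¬ q - 1 = 1),
          if_neg hne1, if_neg hnot]
        ring
  rw [key, Finset.sum_sub_distrib, ← Finset.mul_sum, Finset.sum_ite_eq']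
  rw [if_pos (Nat.mem_divisors_self _ hN)]
  rcases Nat.even_or_odd m with he | ho
  · have hnd : ¬ 2 ∣ (m + 1) := by obtain ⟨k, hk⟩ := he; omega
    have hz : ∀ d ∈ (m + 1).divisors,
        (if d = (m + 1) / 2 ∧ 2 ∣ (m + 1) then ((d : ℕ) : ℂ) ^ n else 0) = 0 := by
      intro d _; simp [hnd]
    rw [Finset.sum_congr rfl hz, Finset.sum_const_zero, mul_zero, sub_zero,
      he.neg_one_pow]
    push_cast; ring
  · have hd2 : 2 ∣ (m + 1) := by obtain ⟨k, hk⟩ := ho; omega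
    have hsum : ∀ d ∈ (m + 1).divisors,
        (if d = (m + 1) / 2 ∧ 2 ∣ (m + 1) then ((d : ℕ) : ℂ) ^ n else 0)
        = (if d = (m + 1) / 2 then ((d : ℕ) : ℂ) ^ n else 0) := by
      intro d _; simp [hd2]
    rw [Finset.sum_congr rfl hsum, Finset.sum_ite_eq',
      if_pos (Nat.mem_divisors.2 ⟨Nat.div_dvd_of_dvd hd2, hN⟩), ho.neg_one_pow]
    have hm : m + 1 = 2 * ((m + 1) / 2) := by omega
    have hx : ((m + 1 : ℕ) : ℂ) = 2 * (((m + 1) / 2 : ℕ) : ℂ) := by exact_mod_cast hm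
    rw [show ((m : ℂ) + 1) = ((m + 1 : ℕ) : ℂ) by push_cast; ring, hx, mul_pow, pow_succ]
    ring
end
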